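/- arXiv:1704.01336 — 2 statements merged into one kernel-verified Lean document; each statement's English description precedes it below -/
import Mathlib

section
/- Let G be a group, G♯ := (G × G) ⋊ {1, τ} where τ is the flip automorphism τ(g,h) = (h,g), and let D := {(g, g⁻¹) : g ∈ G} ⊆ G × G. Then the subgroup of G × G generated by D equals (G' × {e}) · D, where G' is the commutator subgroup of G. -/
/-!
The map `(a, b) ↦ [a][b]` into the abelianization of `G` is a homomorphism killing every
`(g, g⁻¹)`, and its kernel is exactly `(G' × {e}) · D`. Conversely this kernel lies in the
subgroup generated by `D`, because each `(⁅p, q⁆, e)` is a product of three elements of `D`.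
-/

open scoped commutatorElement

namespace Prod

variable {G : Type*} [Group G]

def invGraph (G : Type*) [Inv G] : Set (G × G) := {p | ∃ g : G, p = (g, g⁻¹)}

theorem mk_inv_mem_closure_invGraph (g : G) : (g, g⁻¹) ∈ Subgroup.closure (invGraph G) :=
  Subgroup.subset_closure ⟨g, rfl⟩

theorem commutatorElement_mk_one_eq (p q : G) :
    ((⁅p, q⁆, 1) : G × G) = (p, p⁻¹) * (q, q⁻¹) * (p⁻¹ * q⁻¹, (p⁻¹ * q⁻¹)⁻¹) := by
  simp [commutatorElement_def, mul_assoc]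

theorem mk_one_mem_closure_invGraph {c : G} (hc : c ∈ commutator G) :
    ((c, 1) : G × G) ∈ Subgroup.closure (invGraph G) := by
  have : commutator G ≤ (Subgroup.closure (invGraph G)).comap (MonoidHom.inl G G) := by
    rw [commutator_eq_closure, Subgroup.closure_le]
    rintro _ ⟨p, q, rfl⟩
    simp only [SetLike.mem_coe, Subgroup.mem_comap, MonoidHom.inl_apply,
      commutatorElement_mk_one_eq]
    exact mul_mem (mul_mem (mk_inv_mem_closure_invGraph p) (mk_inv_mem_closure_invGraph q))
      (mk_inv_mem_closure_invGraph _)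
  exact this hc

def mulAbelianization : G × G →* Abelianization G :=
  mulMonoidHom.comp (Abelianization.of.prodMap Abelianization.of)

theorem mem_ker_mulAbelianization {p : G × G} :
    p ∈ (mulAbelianization : G × G →* Abelianization G).ker ↔ p.1 * p.2 ∈ commutator G := by
  rw [← Abelianization.ker_of, MonoidHom.mem_ker, MonoidHom.mem_ker, map_mul]
  rfl

theorem closure_invGraph_eq_ker_mulAbelianization :
    Subgroup.closure (invGraph G) = (mulAbelianization : G × G →* Abelianization G).ker := by
  refine le_antisymm ?_ fun p hp => ?_
  · rw [Subgroup.closure_le]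
    rintro _ ⟨g, rfl⟩
    exact mem_ker_mulAbelianization.mpr (by simp)
  · have hsplit : ((p.1 * p.2, 1) : G × G) * (p.2⁻¹, p.2⁻¹⁻¹) = p := by
      simp
    rw [← hsplit]
    exact mul_mem (mk_one_mem_closure_invGraph (mem_ker_mulAbelianization.mp hp))
      (mk_inv_mem_closure_invGraph _)

end Prod

/-- The subgroup of `G × G` generated by `D = {(g, g⁻¹) : g ∈ G}` equals
`(G' × {e}) · D`, where `G'` is the commutator subgroup of `G`. -/
theorem stmt1 {G : Type*} [Group G] :
    (↑(Subgroup.closure {p : G × G | ∃ g : G, p = (g, g⁻¹)}) : Set (G × G))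
      = {p : G × G | ∃ c ∈ commutator G, ∃ g : G, p = (c * g, g⁻¹)} := by
  ext p
  change p ∈ Subgroup.closure (Prod.invGraph G) ↔ _
  rw [Prod.closure_invGraph_eq_ker_mulAbelianization, Prod.mem_ker_mulAbelianization]
  constructor
  · exact fun hp => ⟨_, hp, p.2⁻¹, by simp⟩
  · rintro ⟨c, hc, g, rfl⟩
    simpa using hc
end

section
/- Let W_R := {x ∈ ℝ^{1,d−1} : x₁ > |x₀|} be the standard right wedge in Minkowski space. Then the semigroup S_{W_R} := {g ∈ P(d) : g·W_R ⊆ W_R} of Poincaré transformations mapping W_R into itself equals the set of g = (b, a) with b ∈ closure(W_R) and a ∈ O_{1,d−1}(ℝ) satisfying a·W_R = W_R; in particular, any linear Lorentz transformation a with a·W_R ⊆ W_R satisfies a·W_R = W_R. -/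
private def mkF {d : ℕ} (i0 : Fin d) (x y : Fin d → ℝ) : ℝ :=
  2 * x i0 * y i0 - ∑ i, x i * y i

private lemma sum2 {d : ℕ} {p q : Fin d} (hpq : p ≠ q) (f : Fin d → ℝ)
    (hf : ∀ j, j ≠ p → j ≠ q → f j = 0) : ∑ i, f i = f p + f q := by
  rw [← Finset.sum_pair hpq]
  exact (Finset.sum_subset (Finset.subset_univ _) (fun j _ hj => by
    simp only [Finset.mem_insert, Finset.mem_singleton, not_or] at hj
    exact hf j hj.1 hj.2)).symm

private lemma mkSupp {d : ℕ} {i0 i1 : Fin d} (h01 : i0 ≠ i1) (x v : Fin d → ℝ)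
    (hv : ∀ j, j ≠ i0 → j ≠ i1 → v j = 0) :
    mkF i0 x v = x i0 * v i0 - x i1 * v i1 := by
  unfold mkF
  rw [sum2 h01 _ (fun j hj0 hj1 => by rw [hv j hj0 hj1, mul_zero])]
  ring

private lemma le_aux {c w : ℝ} (hc : 0 ≤ c) (h : ∀ t : ℝ, 1 < t → w - t * c ≤ 0) : w ≤ c := by
  by_contra hw
  push_neg at hw
  rcases eq_or_lt_of_le hc with h0 | h0
  · have := h 2 one_lt_two; nlinarith
  · have ht : 1 < (w + c) / (2 * c) := by rw [lt_div_iff₀ (by linarith)]; linarith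
    have hc2 : ((w + c) / (2 * c)) * c = (w + c) / 2 := by field_simp
    have key := h _ ht
    rw [hc2] at key
    linarith

private lemma neg_of_mul {c u w : ℝ} (hc : 0 < c) (h : c * u = w) (hw : w < 0) : u < 0 := by
  nlinarith

private lemma coneA {d : ℕ} {i0 i1 : Fin d} (h01 : i0 ≠ i1) (v : Fin d → ℝ)
    (hv : ∀ x : Fin d → ℝ, |x i0| < x i1 → mkF i0 x v ≤ 0) :
    (∀ j, j ≠ i0 → j ≠ i1 → v j = 0) ∧ |v i0| ≤ v i1 := by
  have hsupp : ∀ j, j ≠ i0 → j ≠ i1 → v j = 0 := by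
    intro j hj0 hj1
    by_contra hvj
    set x : Fin d → ℝ := fun i => if i = i1 then 1 else if i = j then (-(v i1 + 1)) / v j else 0
      with hxdef
    have hx0 : x i0 = 0 := by simp [hxdef, h01, Ne.symm hj0]
    have hx1 : x i1 = 1 := by simp [hxdef]
    have hxj : x j = (-(v i1 + 1)) / v j := by simp [hxdef, hj1]
    have hmem : |x i0| < x i1 := by rw [hx0, hx1]; norm_num
    have hs : ∑ i, x i * v i = x i1 * v i1 + x j * v j := by
      apply sum2 (Ne.symm hj1)
      intro m hm1 hmj
      simp [hxdef, hm1, hmj]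
    have hle := hv x hmem
    unfold mkF at hle
    rw [hs, hx0, hx1, hxj, div_mul_cancel₀ _ hvj] at hle
    linarith
  refine ⟨hsupp, ?_⟩
  have hsub : ∀ c t : ℝ, |c| < t → c * v i0 - t * v i1 ≤ 0 := by
    intro c t hct
    set x : Fin d → ℝ := fun i => if i = i0 then c else if i = i1 then t else 0 with hxdef
    have hx0 : x i0 = c := by simp [hxdef]
    have hx1 : x i1 = t := by simp [hxdef, Ne.symm h01]
    have hmem : |x i0| < x i1 := by rw [hx0, hx1]; exact hct
    have hs : ∑ i, x i * v i = x i0 * v i0 + x i1 * v i1 := by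
      apply sum2 h01
      intro m hm0 hm1
      simp [hxdef, hm0, hm1]
    have hle := hv x hmem
    unfold mkF at hle
    rw [hs, hx0, hx1] at hle
    linarith
  have hv1 : 0 ≤ v i1 := by
    have := hsub 0 1 (by norm_num)
    linarith
  have h1 : v i0 ≤ v i1 := le_aux hv1 (fun t ht => by
    have := hsub 1 t (by rwa [abs_one]); linarith)
  have h2 : -(v i0) ≤ v i1 := le_aux hv1 (fun t ht => by
    have := hsub (-1) t (by rwa [abs_neg, abs_one]); linarith)
  exact abs_le.mpr ⟨by linarith, h1⟩

private lemma llCase {d : ℕ} {i0 i1 : Fin d} (h01 : i0 ≠ i1) (v : Fin d → ℝ)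
    (hsupp : ∀ j, j ≠ i0 → j ≠ i1 → v j = 0) (hle : |v i0| ≤ v i1)
    (hll : mkF i0 v v = 0) (hne : v ≠ 0) :
    0 < v i1 ∧ (v i0 = v i1 ∨ v i0 = -(v i1)) := by
  have hsq : v i0 * v i0 - v i1 * v i1 = 0 := by
    rw [← mkSupp h01 v v hsupp]; exact hll
  have hcases : v i0 = v i1 ∨ v i0 = -(v i1) := by
    rcases mul_eq_zero.mp (show (v i0 - v i1) * (v i0 + v i1) = 0 by nlinarith) with h | h
    · left; linarith
    · right; linarith
  refine ⟨?_, hcases⟩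
  rcases lt_or_eq_of_le (le_trans (abs_nonneg _) hle) with h | h
  · exact h
  · exfalso
    apply hne
    have hv1 : v i1 = 0 := h.symm
    have hv0 : v i0 = 0 := by
      have := abs_le.mp hle
      rw [hv1] at this
      linarith [this.1, this.2]
    funext j
    by_cases hj0 : j = i0
    · rw [hj0]; exact hv0
    · by_cases hj1 : j = i1
      · rw [hj1]; exact hv1
      · exact hsupp j hj0 hj1

private lemma core {d : ℕ} {i0 i1 : Fin d} (h01 : i0 ≠ i1)
    (a : (Fin d → ℝ) ≃ₗ[ℝ] (Fin d → ℝ))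
    (hmk : ∀ x y, mkF i0 (a x) (a y) = mkF i0 x y)
    (h : ∀ x : Fin d → ℝ, |x i0| < x i1 → |a x i0| ≤ a x i1) :
    ∀ y : Fin d → ℝ, |y i0| < y i1 → |a.symm y i0| < a.symm y i1 := by
  set lp : Fin d → ℝ := fun i => if i = i0 then 1 else if i = i1 then 1 else 0 with hlp
  set lm : Fin d → ℝ := fun i => if i = i0 then -1 else if i = i1 then 1 else 0 with hlm
  have lp_supp : ∀ j, j ≠ i0 → j ≠ i1 → lp j = 0 := fun j h0 h1 => by simp [hlp, h0, h1]
  have lm_supp : ∀ j, j ≠ i0 → j ≠ i1 → lm j = 0 := fun j h0 h1 => by simp [hlm, h0, h1]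
  have lp0 : lp i0 = 1 := by simp [hlp]
  have lp1 : lp i1 = 1 := by simp [hlp, Ne.symm h01]
  have lm0 : lm i0 = -1 := by simp [hlm]
  have lm1 : lm i1 = 1 := by simp [hlm, Ne.symm h01]
  have mk_lp : ∀ y : Fin d → ℝ, mkF i0 y lp = y i0 - y i1 := fun y => by
    rw [mkSupp h01 y lp lp_supp, lp0, lp1]; ring
  have mk_lm : ∀ y : Fin d → ℝ, mkF i0 y lm = -(y i0) - y i1 := fun y => by
    rw [mkSupp h01 y lm lm_supp, lm0, lm1]; ring
  set va : Fin d → ℝ := a.symm lp with hva_def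
  set vb : Fin d → ℝ := a.symm lm with hvb_def
  have hava : a va = lp := a.apply_symm_apply lp
  have havb : a vb = lm := a.apply_symm_apply lm
  have hva : ∀ x : Fin d → ℝ, |x i0| < x i1 → mkF i0 x va ≤ 0 := by
    intro x hx
    have heq := hmk x va
    rw [hava] at heq
    rw [← heq, mk_lp]
    have := h x hx
    linarith [le_abs_self (a x i0)]
  have hvb : ∀ x : Fin d → ℝ, |x i0| < x i1 → mkF i0 x vb ≤ 0 := by
    intro x hx
    have heq := hmk x vb
    rw [havb] at heq
    rw [← heq, mk_lm]
    have := h x hx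
    linarith [neg_abs_le (a x i0)]
  obtain ⟨sa, la⟩ := coneA h01 va hva
  obtain ⟨sb, lb⟩ := coneA h01 vb hvb
  have hllva : mkF i0 va va = 0 := by
    have heq := hmk va va
    rw [hava] at heq
    rw [← heq, mk_lp, lp0, lp1]; ring
  have hllvb : mkF i0 vb vb = 0 := by
    have heq := hmk vb vb
    rw [havb] at heq
    rw [← heq, mk_lm, lm0, lm1]; ring
  have hne_va : va ≠ 0 := by
    intro h0
    have : lp = 0 := by rw [← hava, h0, map_zero]
    have := congrFun this i1
    rw [lp1] at this
    exact one_ne_zero this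
  have hne_vb : vb ≠ 0 := by
    intro h0
    have : lm = 0 := by rw [← havb, h0, map_zero]
    have := congrFun this i1
    rw [lm1] at this
    exact one_ne_zero this
  obtain ⟨pa, ca⟩ := llCase h01 va sa la hllva hne_va
  obtain ⟨pb, cb⟩ := llCase h01 vb sb lb hllvb hne_vb
  -- same-type exclusion
  have hexcl : (va i0 = va i1 ∧ vb i0 = vb i1) ∨ (va i0 = -(va i1) ∧ vb i0 = -(vb i1)) → False := by
    intro hcase
    have hsm : vb i1 • va = va i1 • vb := by
      funext j
      simp only [Pi.smul_apply, smul_eq_mul]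
      by_cases hj0 : j = i0
      · subst hj0
        rcases hcase with ⟨h1, h2⟩ | ⟨h1, h2⟩ <;> rw [h1, h2] <;> ring
      · by_cases hj1 : j = i1
        · subst hj1; ring
        · rw [sa j hj0 hj1, sb j hj0 hj1]; ring
    have happ := congrArg a hsm
    rw [map_smul, map_smul, hava, havb] at happ
    have := congrFun happ i0
    simp only [Pi.smul_apply, smul_eq_mul, lp0, lm0] at this
    nlinarith
  intro y hy
  set x : Fin d → ℝ := a.symm y with hx_def
  have haxy : a x = y := a.apply_symm_apply y
  have hy' := abs_lt.mp hy
  have hxa : mkF i0 x va = y i0 - y i1 := by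
    have heq := hmk x va
    rw [hava, haxy] at heq
    rw [← heq, mk_lp]
  have hxb : mkF i0 x vb = -(y i0) - y i1 := by
    have heq := hmk x vb
    rw [havb, haxy] at heq
    rw [← heq, mk_lm]
  rcases ca with ca | ca <;> rcases cb with cb | cb
  · exact absurd (Or.inl ⟨ca, cb⟩) hexcl
  · -- va is lp-type, vb is lm-type
    have e1 : va i1 * (x i0 - x i1) = y i0 - y i1 := by
      rw [← hxa, mkSupp h01 x va sa, ca]; ring
    have e2 : vb i1 * (-(x i0) - x i1) = -(y i0) - y i1 := by
      rw [← hxb, mkSupp h01 x vb sb, cb]; ring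
    have u1 : x i0 - x i1 < 0 := neg_of_mul pa e1 (by linarith)
    have u2 : -(x i0) - x i1 < 0 := neg_of_mul pb e2 (by linarith)
    exact abs_lt.mpr ⟨by linarith, by linarith⟩
  · -- va is lm-type, vb is lp-type
    have e1 : va i1 * (-(x i0) - x i1) = y i0 - y i1 := by
      rw [← hxa, mkSupp h01 x va sa, ca]; ring
    have e2 : vb i1 * (x i0 - x i1) = -(y i0) - y i1 := by
      rw [← hxb, mkSupp h01 x vb sb, cb]; ring
    have u1 : -(x i0) - x i1 < 0 := neg_of_mul pa e1 (by linarith)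
    have u2 : x i0 - x i1 < 0 := neg_of_mul pb e2 (by linarith)
    exact abs_lt.mpr ⟨by linarith, by linarith⟩
  · exact absurd (Or.inr ⟨ca, cb⟩) hexcl

private lemma imgEq {d : ℕ} {i0 i1 : Fin d} (h01 : i0 ≠ i1)
    (a : (Fin d → ℝ) ≃ₗ[ℝ] (Fin d → ℝ))
    (hmk : ∀ x y, mkF i0 (a x) (a y) = mkF i0 x y)
    (hweak : ∀ x : Fin d → ℝ, |x i0| < x i1 → |a x i0| ≤ a x i1) :
    a '' {x | |x i0| < x i1} = {x | |x i0| < x i1} := by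
  have h1 := core h01 a hmk hweak
  have hmk' : ∀ x y, mkF i0 (a.symm x) (a.symm y) = mkF i0 x y := by
    intro x y
    conv_rhs => rw [← a.apply_symm_apply x, ← a.apply_symm_apply y]
    exact (hmk _ _).symm
  have h2 := core h01 a.symm hmk' (fun x hx => (h1 x hx).le)
  simp only [LinearEquiv.symm_symm] at h2
  ext y
  constructor
  · rintro ⟨x, hx, rfl⟩
    exact h2 x hx
  · intro hy
    exact ⟨a.symm y, h1 y hy, a.apply_symm_apply y⟩

private lemma weak_of_affine {d : ℕ} {i0 i1 : Fin d}
    (a : (Fin d → ℝ) ≃ₗ[ℝ] (Fin d → ℝ)) (b : Fin d → ℝ)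
    (h : ∀ x : Fin d → ℝ, |x i0| < x i1 → |(a x + b) i0| < (a x + b) i1) :
    ∀ x : Fin d → ℝ, |x i0| < x i1 → |a x i0| ≤ a x i1 := by
  intro x hx
  by_contra habs
  push_neg at habs
  obtain ⟨n, hn⟩ := exists_nat_gt ((|b i0| + |b i1|) / (|a x i0| - a x i1))
  set N : ℝ := (n : ℝ) + 1 with hN_def
  have hNpos : (0:ℝ) < N := by positivity
  have hpos : 0 < |a x i0| - a x i1 := by linarith
  have hN : (|b i0| + |b i1|) / (|a x i0| - a x i1) < N := by
    refine lt_of_lt_of_le hn ?_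
    simp only [hN_def]; linarith
  have hNd : |b i0| + |b i1| < N * (|a x i0| - a x i1) := (div_lt_iff₀ hpos).mp hN
  have hmem : |(N • x) i0| < (N • x) i1 := by
    simp only [Pi.smul_apply, smul_eq_mul, abs_mul, abs_of_pos hNpos]
    exact (mul_lt_mul_iff_right₀ hNpos).mpr hx
  have hkey := h (N • x) hmem
  rw [map_smul] at hkey
  simp only [Pi.add_apply, Pi.smul_apply, smul_eq_mul] at hkey
  have t1 : N * |a x i0| ≤ |N * a x i0 + b i0| + |b i0| := by
    have e : N * |a x i0| = |N * a x i0| := by rw [abs_mul, abs_of_pos hNpos]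
    rw [e]
    calc |N * a x i0| = |(N * a x i0 + b i0) + (-(b i0))| := by congr 1; ring
      _ ≤ |N * a x i0 + b i0| + |(-(b i0))| := abs_add_le _ _
      _ = |N * a x i0 + b i0| + |b i0| := by rw [abs_neg]
  have t2 : b i1 ≤ |b i1| := le_abs_self _
  nlinarith [hkey, t1, t2, hNd]


/-- The standard right wedge `W_R = {x : x₁ > |x₀|}` in Minkowski space `ℝ^{1,d-1}`.
The semigroup `S_{W_R} = {g ∈ P(d) : g·W_R ⊆ W_R}` equals
`{(b,a) : b ∈ closure W_R, a ∈ O_{1,d-1}(ℝ), a·W_R = W_R}`; in particular any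
Lorentz transformation `a` with `a·W_R ⊆ W_R` satisfies `a·W_R = W_R`. -/
theorem stmt16 {d : ℕ} (hd : 2 ≤ d) :
    let i0 : Fin d := ⟨0, by omega⟩
    let i1 : Fin d := ⟨1, by omega⟩
    let W : Set (Fin d → ℝ) := {x | |x i0| < x i1}
    let mk : (Fin d → ℝ) → (Fin d → ℝ) → ℝ :=
      fun x y => 2 * x i0 * y i0 - ∑ i, x i * y i
    (∀ (b : Fin d → ℝ) (a : (Fin d → ℝ) ≃ₗ[ℝ] (Fin d → ℝ)),
      (∀ x y : Fin d → ℝ, mk (a x) (a y) = mk x y) →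
      ((∀ x ∈ W, a x + b ∈ W) ↔ (b ∈ closure W ∧ a '' W = W))) ∧
    (∀ a : (Fin d → ℝ) ≃ₗ[ℝ] (Fin d → ℝ),
      (∀ x y : Fin d → ℝ, mk (a x) (a y) = mk x y) →
      a '' W ⊆ W → a '' W = W) := by
  intro i0 i1 W mk
  have h01 : i0 ≠ i1 := by simp [i0, i1, Fin.ext_iff]
  constructor
  · intro b a hmk
    have hmkF : ∀ x y, mkF i0 (a x) (a y) = mkF i0 x y := hmk
    constructor
    · intro h
      have hW : ∀ x : Fin d → ℝ, |x i0| < x i1 → |(a x + b) i0| < (a x + b) i1 :=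
        fun x hx => h x hx
      constructor
      · -- b ∈ closure W
        set e1 : Fin d → ℝ := fun i => if i = i1 then 1 else 0 with he1
        have hfn : ∀ n : ℕ, (1/((n:ℝ)+1)) • a e1 + b ∈ W := by
          intro n
          have hc : (0:ℝ) < 1/((n:ℝ)+1) := by positivity
          have hxmem : |((1/((n:ℝ)+1)) • e1) i0| < ((1/((n:ℝ)+1)) • e1) i1 := by
            simp only [Pi.smul_apply, smul_eq_mul, he1]
            simpa [h01] using hc
          have := hW _ hxmem
          rw [map_smul] at this
          exact this
        have ht : Filter.Tendsto (fun n : ℕ => (1/((n:ℝ)+1)) • a e1 + b)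
            Filter.atTop (nhds b) := by
          have h0 : Filter.Tendsto (fun n : ℕ => 1/((n:ℝ)+1)) Filter.atTop (nhds 0) :=
            tendsto_one_div_add_atTop_nhds_zero_nat
          have := (h0.smul_const (a e1)).add_const b
          simpa using this
        exact mem_closure_of_tendsto ht (Filter.Eventually.of_forall hfn)
      · -- a '' W = W
        exact imgEq h01 a hmkF (weak_of_affine a b hW)
    · rintro ⟨hb, haW⟩ x hx
      have hb' : |b i0| ≤ b i1 := by
        have hcl : closure W ⊆ {x : Fin d → ℝ | |x i0| ≤ x i1} :=
          closure_minimal (fun z hz => show |z i0| ≤ z i1 from le_of_lt hz)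
            (isClosed_le ((continuous_apply i0).abs) (continuous_apply i1))
        exact hcl hb
      have hax : a x ∈ W := by
        have : a x ∈ a '' W := Set.mem_image_of_mem a hx
        rwa [haW] at this
      have hax' : |a x i0| < a x i1 := hax
      show |(a x + b) i0| < (a x + b) i1
      simp only [Pi.add_apply]
      calc |a x i0 + b i0| ≤ |a x i0| + |b i0| := abs_add_le _ _
        _ < a x i1 + b i1 := by linarith
  · intro a hmk haW
    have hmkF : ∀ x y, mkF i0 (a x) (a y) = mkF i0 x y := hmk
    have hweak : ∀ x : Fin d → ℝ, |x i0| < x i1 → |a x i0| ≤ a x i1 := by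
      intro x hx
      have : a x ∈ W := haW (Set.mem_image_of_mem a hx)
      exact le_of_lt this
    exact imgEq h01 a hmkF hweak
end
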